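/- (Correctness of the reduction in Theorem 1.) In the SpecialRM instance constructed from a finite simple graph G' = (V', E') with minimum degree at least 1 and price p > 0, a set S ⊆ V' satisfies σ_p(S) = V' if and only if S is a vertex cover of G'. -/

import Mathlib

open Finset
open scoped Classical

/-- A set `S` is adoption-closed for seed set `A` at price `p`. The adoption set `σ_p(A)`
is the least such set. -/
def AdoptClosed {V : Type*} [DecidableEq V]
    (χ : V → ℝ) (w : V → V → ℝ) (F : ℝ → ℝ) (p : ℝ) (A S : Finset V) : Prop :=
  A ⊆ S ∧ ∀ v, p ≤ χ v + F (∑ u ∈ S.erase v, w u v) → v ∈ S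

/-- The weights of the SpecialRM instance constructed from a simple graph `G` at price `p`:
`w u v = p / deg v` if `{u,v}` is an edge, and `0` otherwise. -/
noncomputable def srmW {V : Type*} [Fintype V] (G : SimpleGraph V) [DecidableRel G.Adj]
    (p : ℝ) (u v : V) : ℝ :=
  if G.Adj u v then p / G.degree v else 0

/-!
In the SpecialRM instance a vertex `v` receives influence `p / deg v` from each adopting
neighbour, so it is pushed to the price `p` exactly when all its neighbours adopt. Adoption-closed
sets are therefore the supersets `T` of the seed set that contain every vertex whose whole
neighbourhood lies in `T`. If `S` misses both ends of an edge `ab`, then `V \ {a, b}` is such a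
set, so `σ_p(S) ≠ V`; if `S` is a vertex cover, every vertex outside `S` has all its neighbours
in `S` and adopts.
-/

namespace SimpleGraph

variable {V : Type*} [Fintype V] (G : SimpleGraph V) [DecidableRel G.Adj]

lemma neighborFinset_subset_of_notMem {S : Finset V} (hS : ∀ a b, G.Adj a b → a ∈ S ∨ b ∈ S)
    {v : V} (hv : v ∉ S) : G.neighborFinset v ⊆ S := fun u hu =>
  (hS u v ((G.mem_neighborFinset v u).1 hu).symm).resolve_right hv

variable [DecidableEq V]

lemma sum_erase_srmW (p : ℝ) (T : Finset V) (v : V) :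
    ∑ u ∈ T.erase v, srmW G p u v = #(T ∩ G.neighborFinset v) * (p / G.degree v) := by
  have hw : ∀ u, srmW G p u v = if u ∈ G.neighborFinset v then p / G.degree v else 0 := by
    intro u
    simp only [srmW, mem_neighborFinset, G.adj_comm v u]
  have hT : T.erase v ∩ G.neighborFinset v = T ∩ G.neighborFinset v := by
    rw [erase_inter, erase_eq_of_notMem (by simp)]
  simp only [hw, sum_ite_mem, hT, sum_const, nsmul_eq_mul]

lemma le_sum_erase_srmW_iff {p : ℝ} (hp : 0 < p) {v : V} (hv : 0 < G.degree v)
    (T : Finset V) :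
    p ≤ ∑ u ∈ T.erase v, srmW G p u v ↔ G.neighborFinset v ⊆ T := by
  have hv' : (0 : ℝ) < G.degree v := by exact_mod_cast hv
  rw [sum_erase_srmW, mul_div_assoc', le_div_iff₀ hv', mul_comm, mul_le_mul_iff_left₀ hp,
    Nat.cast_le, ← card_neighborFinset_eq_degree, ← inter_eq_right]
  exact ⟨eq_of_subset_of_card_le inter_subset_right, fun h => (congrArg card h).ge⟩

lemma adoptClosed_srmW_iff (hdeg : ∀ v, 1 ≤ G.degree v) {p : ℝ} (hp : 0 < p)
    (S T : Finset V) :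
    AdoptClosed (fun _ => (0 : ℝ)) (srmW G p) id p S T ↔
      S ⊆ T ∧ ∀ v, G.neighborFinset v ⊆ T → v ∈ T := by
  simp only [AdoptClosed, zero_add, id, G.le_sum_erase_srmW_iff hp (hdeg _)]

lemma mem_compl_pair_of_neighborFinset_subset {a b v : V} (hab : G.Adj a b)
    (hv : G.neighborFinset v ⊆ ({a, b} : Finset V)ᶜ) : v ∈ ({a, b} : Finset V)ᶜ := by
  rw [mem_compl, mem_insert, mem_singleton]
  rintro (rfl | rfl)
  · exact mem_compl.1 (hv ((G.mem_neighborFinset _ _).2 hab)) (by simp)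
  · exact mem_compl.1 (hv ((G.mem_neighborFinset _ _).2 hab.symm)) (by simp)

end SimpleGraph

/-- Correctness of the reduction in Theorem 1: in the SpecialRM
instance, σ_p(S) = V if and only if S is a vertex cover of G. -/
theorem specialRM_adoption_univ_iff_vertexCover
    {V : Type*} [Fintype V] [DecidableEq V]
    (G : SimpleGraph V) [DecidableRel G.Adj]
    (hdeg : ∀ v, 1 ≤ G.degree v) (p : ℝ) (hp : 0 < p)
    (S : Finset V) (σ : Finset V)
    (hσ : IsLeast {T : Finset V | AdoptClosed (fun _ => (0 : ℝ)) (srmW G p) id p S T} σ) :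
    σ = Finset.univ ↔ ∀ a b, G.Adj a b → a ∈ S ∨ b ∈ S := by
  obtain ⟨hσ_closed, hσ_least⟩ := hσ
  obtain ⟨hSσ, hσ_nbr⟩ := (G.adoptClosed_srmW_iff hdeg hp S σ).1 hσ_closed
  constructor
  · rintro rfl a b hab
    by_contra! hab_S
    have hS : S ⊆ ({a, b} : Finset V)ᶜ := fun x hx => by
      rw [mem_compl, mem_insert, mem_singleton]
      rintro (rfl | rfl)
      exacts [hab_S.1 hx, hab_S.2 hx]
    have huniv : univ ⊆ ({a, b} : Finset V)ᶜ := hσ_least <|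
      (G.adoptClosed_srmW_iff hdeg hp S _).2
        ⟨hS, fun _ hv => G.mem_compl_pair_of_neighborFinset_subset hab hv⟩
    exact mem_compl.1 (huniv (mem_univ a)) (mem_insert_self a {b})
  · intro hcover
    refine eq_univ_of_forall fun v => ?_
    by_cases hv : v ∈ S
    · exact hSσ hv
    · exact hσ_nbr v ((G.neighborFinset_subset_of_notMem hcover hv).trans hSσ)
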